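/- arXiv:1911.00613 — 2 statements merged into one kernel-verified Lean document; each statement's English description precedes it below -/
import Mathlib

section
/- Let (𝒞,𝒞⊥) be a cotorsion pair in ℰ. Let p : A → B be an acyclic fibration with A, B ∈ 𝒞⊥, and let f : C → B be any morphism with C ∈ 𝒞⊥. Then the pullback A ×_B C (computed in the ambient abelian category 𝒜) is isomorphic to an object of 𝒞⊥, and the projection A ×_B C → C is an acyclic fibration. -/
/-!
The kernel of `p` survives base change: pulling back `0 ⟶ K ⟶ A ⟶ B ⟶ 0` along `f` gives
`0 ⟶ K ⟶ A ×_B C₀ ⟶ C₀ ⟶ 0`, so everything reduces to `Ip = Cc⊥` being closed under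
extensions. For `0 ⟶ K ⟶ P ⟶ C₀ ⟶ 0` and an extension `0 ⟶ P ⟶ M ⟶ X ⟶ 0` with `X ∈ Cc`,
push the extension out along `P ⟶ C₀`; it splits since `Ext¹(X, C₀) = 0`. The map from `M`
to that pushout is a cokernel of `K ⟶ M`, and pulling it back along the splitting gives an
extension of `X` by `K`, which splits since `Ext¹(X, K) = 0`; its section, read in `M`,
splits the original extension.
-/

open CategoryTheory CategoryTheory.Limits

universe v u

variable {𝒜 : Type u} [Category.{v} 𝒜] [Abelian 𝒜]

/-- `(f, g)` forms a short exact sequence `0 ⟶ X ⟶ Y ⟶ Z ⟶ 0` in the ambient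
abelian category `𝒜`. -/
def IsShortExactSeq {X Y Z : 𝒜} (f : X ⟶ Y) (g : Y ⟶ Z) : Prop :=
  ∃ w : f ≫ g = 0, (ShortComplex.mk f g w).ShortExact

/-- A class of objects is closed under isomorphisms. -/
def IsoClosed (P : 𝒜 → Prop) : Prop := ∀ ⦃X Y : 𝒜⦄, (X ≅ Y) → P X → P Y

/-- `Ext¹(X, Y) = 0` relative to the exact subcategory determined by `E`:
every short exact sequence `0 ⟶ Y ⟶ M ⟶ X ⟶ 0` in `E` splits. -/
def Ext1IsZero (E : 𝒜 → Prop) (X Y : 𝒜) : Prop :=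
  ∀ ⦃M : 𝒜⦄ (f : Y ⟶ M) (g : M ⟶ X), E M → IsShortExactSeq f g →
    ∃ r : M ⟶ Y, f ≫ r = 𝟙 Y

/-- `(C, I)` is a cotorsion pair in the exact subcategory of `𝒜` determined by
the class of objects `E`: the two classes are each other's orthogonal
complement with respect to `Ext¹`. -/
structure IsCotorsionPair (E C I : 𝒜 → Prop) : Prop where
  right_eq : ∀ Y, I Y ↔ (E Y ∧ ∀ ⦃X⦄, C X → Ext1IsZero E X Y)
  left_eq : ∀ X, C X ↔ (E X ∧ ∀ ⦃Y⦄, I Y → Ext1IsZero E X Y)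

/-- The cotorsion pair `(C, I)` in `E` is complete: every object of `E` admits
both kinds of approximation sequences. -/
def IsCompleteCP (E C I : 𝒜 → Prop) : Prop :=
  (∀ A, E A → ∃ (Y P : 𝒜) (f : A ⟶ Y) (g : Y ⟶ P),
      I Y ∧ C P ∧ IsShortExactSeq f g) ∧
  (∀ A, E A → ∃ (Y P : 𝒜) (f : Y ⟶ P) (g : P ⟶ A),
      I Y ∧ C P ∧ IsShortExactSeq f g)

/-- The cotorsion pair is hereditary: `C` is closed under kernels of
admissible epimorphisms in `E`. -/
def IsHereditaryCP (E C : 𝒜 → Prop) : Prop :=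
  ∀ ⦃X Y Z : 𝒜⦄ (f : X ⟶ Y) (g : Y ⟶ Z),
    IsShortExactSeq f g → E X → C Y → C Z → C X

/-- A cofibration: an admissible monomorphism between objects of `C` whose
cokernel lies in `C`. -/
def IsCofib (C : 𝒜 → Prop) {X Y : 𝒜} (f : X ⟶ Y) : Prop :=
  C X ∧ C Y ∧ ∃ (W : 𝒜) (g : Y ⟶ W), C W ∧ IsShortExactSeq f g

/-- An acyclic fibration: an admissible epimorphism in `E` whose kernel lies
in `I`. -/
def IsAcyclicFib (E I : 𝒜 → Prop) {Y Z : 𝒜} (g : Y ⟶ Z) : Prop :=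
  E Y ∧ E Z ∧ ∃ (K : 𝒜) (k : K ⟶ Y), I K ∧ IsShortExactSeq k g

/-- An acyclic cofibration: an admissible monomorphism between objects of `C`
whose cokernel lies in `C ∩ Z`. -/
def IsAcyclicCofib (C Zc : 𝒜 → Prop) {X Y : 𝒜} (f : X ⟶ Y) : Prop :=
  C X ∧ C Y ∧ ∃ (W : 𝒜) (g : Y ⟶ W), C W ∧ Zc W ∧ IsShortExactSeq f g

/-- A weak equivalence: a morphism between objects of `C` that factors as an
acyclic cofibration followed by an acyclic fibration. -/
def IsWeakEquiv (E C I Zc : 𝒜 → Prop) {X Y : 𝒜} (f : X ⟶ Y) : Prop :=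
  C X ∧ C Y ∧ ∃ (M : 𝒜) (i : X ⟶ M) (p : M ⟶ Y),
    IsAcyclicCofib C Zc i ∧ IsAcyclicFib E I p ∧ i ≫ p = f

/-- The standing setup: a complete hereditary cotorsion pair `(Cc, Ip)` in the
exact subcategory of `𝒜` determined by the isomorphism-closed,
extension-closed class `E`, together with an isomorphism-closed class
`Zc ⊆ E` with `Ip ⊆ Zc`, such that `Zc ∩ Cc` is closed under extensions and
under cokernels of admissible monomorphisms in `Cc`. -/
structure CotorsionSetup (E Cc Ip Zc : 𝒜 → Prop) : Prop where
  isoE : IsoClosed E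
  isoC : IsoClosed Cc
  isoI : IsoClosed Ip
  isoZ : IsoClosed Zc
  extClosedE : ∀ ⦃X Y Z : 𝒜⦄ (f : X ⟶ Y) (g : Y ⟶ Z),
    IsShortExactSeq f g → E X → E Z → E Y
  cp : IsCotorsionPair E Cc Ip
  complete : IsCompleteCP E Cc Ip
  hereditary : IsHereditaryCP E Cc
  zSubE : ∀ ⦃X⦄, Zc X → E X
  iSubZ : ∀ ⦃X⦄, Ip X → Zc X
  zcExtClosed : ∀ ⦃X Y Z : 𝒜⦄ (f : X ⟶ Y) (g : Y ⟶ Z), IsShortExactSeq f g →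
    Cc X → Cc Y → Cc Z → Zc X → Zc Z → Zc Y
  zcCokerClosed : ∀ ⦃X Y Z : 𝒜⦄ (f : X ⟶ Y) (g : Y ⟶ Z), IsShortExactSeq f g →
    Cc X → Cc Y → Cc Z → Zc X → Zc Y → Zc Z

def IsExtensionClosed (E : 𝒜 → Prop) : Prop :=
  ∀ ⦃X Y Z : 𝒜⦄ (f : X ⟶ Y) (g : Y ⟶ Z), IsShortExactSeq f g → E X → E Z → E Y

namespace IsShortExactSeq

lemma exists_retraction_iff_exists_section {X Y Z : 𝒜} {f : X ⟶ Y} {g : Y ⟶ Z}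
    (h : IsShortExactSeq f g) :
    (∃ r : Y ⟶ X, f ≫ r = 𝟙 X) ↔ ∃ σ : Z ⟶ Y, σ ≫ g = 𝟙 Z := by
  obtain ⟨w, hse⟩ := h
  constructor
  · rintro ⟨r, hr⟩
    exact ⟨_, (ShortComplex.Splitting.ofExactOfRetraction _ hse.exact r hr hse.epi_g).s_g⟩
  · rintro ⟨σ, hσ⟩
    exact ⟨_, (ShortComplex.Splitting.ofExactOfSection _ hse.exact σ hσ hse.mono_f).f_r⟩

lemma pullback_snd {K A B : 𝒜} {k : K ⟶ A} {p : A ⟶ B} (h : IsShortExactSeq k p)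
    {C : 𝒜} (f : C ⟶ B) : ∃ k₀ : K ⟶ pullback p f, IsShortExactSeq k₀ (pullback.snd p f) := by
  obtain ⟨w, hse⟩ := h
  have := hse.mono_f
  have := hse.epi_g
  have hk : k ≫ p = (0 : K ⟶ C) ≫ f := by rw [w, zero_comp]
  have w₀ : pullback.lift k 0 hk ≫ pullback.snd p f = 0 := pullback.lift_snd _ _ _
  have : Mono (pullback.lift k 0 hk) := mono_of_mono_fac (pullback.lift_fst k 0 hk)
  have hlim : IsLimit (KernelFork.ofι (pullback.lift k 0 hk) w₀) := by
    refine KernelFork.IsLimit.ofι' _ _ fun {T} m hm => ?_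
    have hm' : (m ≫ pullback.fst p f) ≫ p = 0 := by
      rw [Category.assoc, pullback.condition, ← Category.assoc, hm, zero_comp]
    refine ⟨hse.exact.lift (m ≫ pullback.fst p f) hm', pullback.hom_ext ?_ ?_⟩
    · rw [Category.assoc, pullback.lift_fst]
      exact hse.exact.lift_f _ _
    · rw [Category.assoc, pullback.lift_snd, comp_zero, hm]
  exact ⟨_, w₀, .mk' (ShortComplex.exact_of_f_is_kernel _ hlim) inferInstance inferInstance⟩

lemma pushout_inr {P M X : 𝒜} {i : P ⟶ M} {q : M ⟶ X} (h : IsShortExactSeq i q)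
    {C : 𝒜} (s : P ⟶ C) :
    ∃ q' : pushout i s ⟶ X, pushout.inl i s ≫ q' = q ∧
      IsShortExactSeq (pushout.inr i s) q' := by
  obtain ⟨w, hse⟩ := h
  have := hse.mono_f
  have := hse.epi_g
  have hq : i ≫ q = s ≫ (0 : C ⟶ X) := by rw [w, comp_zero]
  have w' : pushout.inr i s ≫ pushout.desc q 0 hq = 0 := pushout.inr_desc _ _ _
  have : Epi (pushout.desc q 0 hq) := epi_of_epi_fac (pushout.inl_desc q 0 hq)
  have hcolim : IsColimit (CokernelCofork.ofπ (pushout.desc q 0 hq) w') := by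
    refine CokernelCofork.IsColimit.ofπ' _ _ fun {T} m hm => ?_
    have hm' : i ≫ pushout.inl i s ≫ m = 0 := by
      rw [← Category.assoc, pushout.condition, Category.assoc, hm, comp_zero]
    refine ⟨hse.exact.desc (pushout.inl i s ≫ m) hm', pushout.hom_ext ?_ ?_⟩
    · rw [← Category.assoc, pushout.inl_desc]
      exact hse.exact.g_desc _ _
    · rw [← Category.assoc, pushout.inr_desc, zero_comp, hm]
  exact ⟨_, pushout.inl_desc _ _ _, w',
    .mk' (ShortComplex.exact_of_g_is_cokernel _ hcolim) inferInstance inferInstance⟩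

lemma comp_pushout_inl {K P C : 𝒜} {k : K ⟶ P} {s : P ⟶ C} (h : IsShortExactSeq k s)
    {M : 𝒜} (i : P ⟶ M) [Mono i] : IsShortExactSeq (k ≫ i) (pushout.inl i s) := by
  obtain ⟨w, hse⟩ := h
  have := hse.mono_f
  have := hse.epi_g
  have w' : (k ≫ i) ≫ pushout.inl i s = 0 := by
    rw [Category.assoc, pushout.condition, reassoc_of% w, zero_comp]
  have hcolim : IsColimit (CokernelCofork.ofπ (pushout.inl i s) w') := by
    refine CokernelCofork.IsColimit.ofπ' _ _ fun {T} m hm => ?_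
    have hm' : k ≫ i ≫ m = 0 := by rw [← Category.assoc, hm]
    exact ⟨pushout.desc m (hse.exact.desc (i ≫ m) hm') (hse.exact.g_desc _ _).symm,
      pushout.inl_desc _ _ _⟩
  exact ⟨w', .mk' (ShortComplex.exact_of_g_is_cokernel _ hcolim) inferInstance inferInstance⟩

end IsShortExactSeq

lemma Ext1IsZero.of_extension {E : 𝒜 → Prop} (hE : IsExtensionClosed E)
    {K P C X : 𝒜} {k : K ⟶ P} {s : P ⟶ C} (hks : IsShortExactSeq k s)
    (hK : Ext1IsZero E X K) (hC : Ext1IsZero E X C) (hEK : E K) (hEC : E C) (hEX : E X) :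
    Ext1IsZero E X P := by
  intro M i q _ hiq
  have : Mono i := hiq.choose_spec.mono_f
  obtain ⟨q', hq', hN⟩ := hiq.pushout_inr s
  obtain ⟨σ, hσ⟩ := hN.exists_retraction_iff_exists_section.mp (hC _ _ (hE _ _ hN hEC hEX) hN)
  obtain ⟨k₀, hM₀⟩ := (hks.comp_pushout_inl i).pullback_snd σ
  obtain ⟨τ, hτ⟩ :=
    hM₀.exists_retraction_iff_exists_section.mp (hK _ _ (hE _ _ hM₀ hEK hEX) hM₀)
  refine hiq.exists_retraction_iff_exists_section.mpr ⟨τ ≫ pullback.fst _ _, ?_⟩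
  calc (τ ≫ pullback.fst _ _) ≫ q = τ ≫ pullback.fst _ _ ≫ pushout.inl i s ≫ q' := by
        rw [hq', Category.assoc]
    _ = τ ≫ pullback.snd _ _ ≫ σ ≫ q' := by rw [pullback.condition_assoc]
    _ = 𝟙 X := by rw [hσ, Category.comp_id, hτ]

lemma IsCotorsionPair.right_of_extension {E Cc Ip : 𝒜 → Prop} (hCP : IsCotorsionPair E Cc Ip)
    (hE : IsExtensionClosed E) {K P C : 𝒜} {k : K ⟶ P} {s : P ⟶ C}
    (hks : IsShortExactSeq k s) (hK : Ip K) (hC : Ip C) : Ip P := by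
  rw [hCP.right_eq] at hK hC ⊢
  exact ⟨hE _ _ hks hK.1 hC.1, fun X hX =>
    .of_extension hE hks (hK.2 hX) (hC.2 hX) hK.1 hC.1 ((hCP.left_eq X).mp hX).1⟩

theorem cotorsion_pullback_acyclicFib_general
    (E Cc Ip : 𝒜 → Prop) (hCP : IsCotorsionPair E Cc Ip)
    (hEext : ∀ ⦃X Y Z : 𝒜⦄ (f : X ⟶ Y) (g : Y ⟶ Z),
      IsShortExactSeq f g → E X → E Z → E Y)
    {A B C₀ : 𝒜} (p : A ⟶ B) (hp : IsAcyclicFib E Ip p)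
    (f : C₀ ⟶ B) (hC₀ : Ip C₀) :
    Ip (pullback p f) ∧ IsAcyclicFib E Ip (pullback.snd p f) := by
  obtain ⟨-, -, K, k, hK, hkp⟩ := hp
  obtain ⟨k₀, hses⟩ := hkp.pullback_snd f
  have hP : Ip (pullback p f) := hCP.right_of_extension hEext hses hK hC₀
  have hIpE : ∀ ⦃X⦄, Ip X → E X := fun X hX => ((hCP.right_eq X).mp hX).1
  exact ⟨hP, hIpE hP, hIpE hC₀, K, k₀, hK, hses⟩

/-- Let `(Cc, Ip)` be a cotorsion pair in `E`.  Let
`p : A ⟶ B` be an acyclic fibration with `A, B ∈ Ip` and let `f : C₀ ⟶ B` be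
any morphism with `C₀ ∈ Ip`.  Then the pullback `A ×_B C₀` (computed in the
ambient abelian category `𝒜`) lies in `Ip` (up to isomorphism), and the
projection `A ×_B C₀ ⟶ C₀` is an acyclic fibration. -/
theorem cotorsion_pullback_acyclicFib
    (E Cc Ip : 𝒜 → Prop) (hCP : IsCotorsionPair E Cc Ip)
    (hEiso : IsoClosed E) (hIiso : IsoClosed Ip)
    (hEext : ∀ ⦃X Y Z : 𝒜⦄ (f : X ⟶ Y) (g : Y ⟶ Z),
      IsShortExactSeq f g → E X → E Z → E Y)
    {A B C₀ : 𝒜} (p : A ⟶ B) (hp : IsAcyclicFib E Ip p)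
    (hA : Ip A) (hB : Ip B) (f : C₀ ⟶ B) (hC₀ : Ip C₀) :
    Ip (pullback p f) ∧ IsAcyclicFib E Ip (pullback.snd p f) :=
  cotorsion_pullback_acyclicFib_general E Cc Ip hCP hEext p hp f hC₀
end

section
/- Consider a commutative diagram in 𝒞 with rows C ←j– A –i→ B and C′ ←j′– A′ –i′→ B′ and vertical maps γ : C → C′, α : A → A′, β : B → B′, where i and i′ are cofibrations, α, β, γ are acyclic cofibrations, and the induced map cok α → cok β on cokernels is a cofibration. Then the induced map on pushouts φ : B +_A C → B′ +_{A′} C′ is an acyclic cofibration. -/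
open CategoryTheory CategoryTheory.Limits

universe v u

variable {𝒜 : Type u} [Category.{v} 𝒜] [Abelian 𝒜]

/-!
Factor `φ` through `R = B +_A C'` as `φ₁ : B +_A C₀ ⟶ R` followed by `φ₂ : R ⟶ B' +_{A'} C'`.
The map `φ₁` is a cobase change of `γ`, and `φ₂` is a cobase change of the comparison map
`θ : B +_A A' ⟶ B'`. A morphism of short exact sequences from `B ⟶ B +_A A' ⟶ cok α` to
`B ⟶ B' ⟶ cok β` shows that `θ` is a monomorphism with the same cokernel as `cok α ⟶ cok β`,
which lies in `𝒞 ∩ 𝒵` because `𝒵 ∩ 𝒞` is closed under cokernels of admissible monomorphisms.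
Acyclic cofibrations are stable under cobase change and composition since `𝒞`, the left class of
a cotorsion pair in an extension-closed `ℰ`, is itself closed under extensions.
-/

namespace IsShortExactSeq

variable {X Y Z : 𝒜} {f : X ⟶ Y} {g : Y ⟶ Z}

lemma zero (h : IsShortExactSeq f g) : f ≫ g = 0 := h.choose

lemma shortExact (h : IsShortExactSeq f g) : (ShortComplex.mk f g h.zero).ShortExact :=
  h.choose_spec

lemma mono (h : IsShortExactSeq f g) : Mono f := h.shortExact.mono_f

lemma epi (h : IsShortExactSeq f g) : Epi g := h.shortExact.epi_g

lemma exact_up_to_refinements (h : IsShortExactSeq f g) {T : 𝒜} (y : T ⟶ Y) (hy : y ≫ g = 0) :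
    ∃ (T' : 𝒜) (π : T' ⟶ T) (_ : Epi π) (x : T' ⟶ X), π ≫ y = x ≫ f :=
  h.shortExact.exact.exact_up_to_refinements y hy

lemma of_exact_up_to_refinements (w : f ≫ g = 0) [Mono f] [Epi g]
    (hfg : ∀ ⦃T : 𝒜⦄ (y : T ⟶ Y), y ≫ g = 0 →
      ∃ (T' : 𝒜) (π : T' ⟶ T) (_ : Epi π) (x : T' ⟶ X), π ≫ y = x ≫ f) :
    IsShortExactSeq f g :=
  ⟨w, .mk' ((ShortComplex.mk f g w).exact_iff_exact_up_to_refinements.2 hfg) ‹_› ‹_›⟩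

lemma cokernel_π (f : X ⟶ Y) [Mono f] : IsShortExactSeq f (cokernel.π f) :=
  ⟨cokernel.condition f, .mk' (ShortComplex.exact_of_g_is_cokernel _ (cokernelIsCokernel f))
    ‹_› (coequalizer.π_epi)⟩

noncomputable def cokernelIso (h : IsShortExactSeq f g) : cokernel f ≅ Z :=
  IsColimit.coconePointUniqueUpToIso (cokernelIsCokernel f) h.shortExact.gIsCokernel

lemma exists_pullback_snd {M : 𝒜} (h : IsShortExactSeq f g) (u : M ⟶ Z) :
    ∃ k : X ⟶ pullback g u, IsShortExactSeq k (pullback.snd g u) := by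
  have := h.mono
  have := h.epi
  have w : f ≫ g = 0 ≫ u := by simp [h.zero]
  have hk : pullback.lift f 0 w ≫ pullback.fst g u = f := pullback.lift_fst _ _ _
  have : Mono (pullback.lift f 0 w : X ⟶ pullback g u) := mono_of_mono_fac hk
  refine ⟨pullback.lift f 0 w,
    of_exact_up_to_refinements (pullback.lift_snd _ _ _) fun T y hy => ?_⟩
  obtain ⟨T', π, _, x, hx⟩ := h.exact_up_to_refinements (y ≫ pullback.fst g u) (by
    simp [pullback.condition, reassoc_of% hy])
  exact ⟨T', π, inferInstance, x, by ext <;> simp [hx, hy, hk, pullback.lift_snd]⟩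

lemma comp_cokernel_π {I M : 𝒜} {f : I ⟶ M} {g : M ⟶ Y} {u : X ⟶ Y} {v : Y ⟶ Z}
    (hfg : IsShortExactSeq f g) (huv : IsShortExactSeq u v) (s : X ⟶ M) (hs : s ≫ g = u) :
    ∃ q : cokernel s ⟶ Z, IsShortExactSeq (f ≫ cokernel.π s) q := by
  have := hfg.mono
  have := hfg.epi
  have := huv.mono
  have := huv.epi
  have : Mono s := mono_of_mono_fac hs
  have hgv : s ≫ g ≫ v = 0 := by rw [reassoc_of% hs, huv.zero]
  have : Epi (cokernel.desc s (g ≫ v) hgv) := epi_of_epi_fac (cokernel.π_desc _ _ _)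
  have : Mono (f ≫ cokernel.π s) := by
    refine (Preadditive.mono_iff_cancel_zero _).2 fun T t ht => ?_
    obtain ⟨T', π, _, x, hx⟩ := (cokernel_π s).exact_up_to_refinements (t ≫ f) (by simpa using ht)
    have hx0 : x = 0 := by
      rw [← cancel_mono u, ← hs, ← reassoc_of% hx, hfg.zero]
      simp
    simpa [hx0, ← cancel_epi π, ← cancel_mono f] using hx
  refine ⟨cokernel.desc s (g ≫ v) hgv, of_exact_up_to_refinements (by simp [reassoc_of% hfg.zero])
    fun T y hy => ?_⟩
  obtain ⟨T₁, π₁, _, m, hm⟩ := surjective_up_to_refinements_of_epi (cokernel.π s) y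
  obtain ⟨T₂, π₂, _, n, hn⟩ := huv.exact_up_to_refinements (m ≫ g) (by
    simpa [hy] using (hm =≫ cokernel.desc s (g ≫ v) hgv).symm)
  obtain ⟨T₃, π₃, _, l, hl⟩ := hfg.exact_up_to_refinements (π₂ ≫ m - n ≫ s) (by
    simp [hn, hs])
  refine ⟨T₃, π₃ ≫ π₂ ≫ π₁, inferInstance, l, ?_⟩
  rw [Category.assoc, ← reassoc_of% hl]
  simp [hm]

lemma of_isPushout {A B C P W : 𝒜} {f : A ⟶ B} {p : B ⟶ W} (h : IsShortExactSeq f p)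
    {g : A ⟶ C} {inl : B ⟶ P} {inr : C ⟶ P} (sq : IsPushout f g inl inr) :
    IsShortExactSeq inr (sq.desc p 0 (by simp [h.zero])) := by
  have := h.mono
  have := h.epi
  have : Mono inr := Abelian.mono_inr_of_isColimit f g sq.isColimit
  have hinl : inl ≫ sq.desc p 0 (by simp [h.zero]) = p := sq.inl_desc _ _ _
  have hinr : inr ≫ sq.desc p 0 (by simp [h.zero]) = 0 := sq.inr_desc _ _ _
  have : Epi (sq.desc p 0 (by simp [h.zero])) := epi_of_epi_fac hinl
  refine of_exact_up_to_refinements hinr fun T y hy => ?_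
  obtain ⟨T₁, π₁, _, x₂, x₃, hx⟩ := sq.hom_eq_add_up_to_refinements y
  obtain ⟨T₂, π₂, _, z, hz⟩ := h.exact_up_to_refinements x₂ (by
    simpa [hy, hinl, hinr] using (hx =≫ sq.desc p 0 (by simp [h.zero])).symm)
  refine ⟨T₂, π₂ ≫ π₁, inferInstance, z ≫ g + π₂ ≫ x₃, ?_⟩
  simp [hx, reassoc_of% hz, sq.w]

lemma comparison {B G B' W₁ W₂ W₃ : 𝒜} {m₁ : B ⟶ G} {c₁ : G ⟶ W₁} {m₂ : B ⟶ B'}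
    {c₂ : B' ⟶ W₂} {e : W₁ ⟶ W₂} {c₃ : W₂ ⟶ W₃} (h₁ : IsShortExactSeq m₁ c₁)
    (h₂ : IsShortExactSeq m₂ c₂) (h₃ : IsShortExactSeq e c₃) {θ : G ⟶ B'}
    (hθ : m₁ ≫ θ = m₂) (he : c₁ ≫ e = θ ≫ c₂) : IsShortExactSeq θ (c₂ ≫ c₃) := by
  have := h₁.mono
  have := h₂.mono
  have := h₃.mono
  have := h₁.epi
  have := h₂.epi
  have := h₃.epi
  have : Mono θ := ShortComplex.mono_τ₂_of_exact_of_mono (S₁ := .mk m₁ c₁ h₁.zero)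
    (S₂ := .mk m₂ c₂ h₂.zero) ⟨𝟙 B, θ, e, by simp [hθ], he.symm⟩ h₁.shortExact.exact
  refine of_exact_up_to_refinements (by rw [← reassoc_of% he, h₃.zero, comp_zero])
    fun T x hx => ?_
  obtain ⟨T₁, π₁, _, a, ha⟩ := h₃.exact_up_to_refinements (x ≫ c₂) (by simpa using hx)
  obtain ⟨T₂, π₂, _, b, hb⟩ := surjective_up_to_refinements_of_epi c₁ a
  obtain ⟨T₃, π₃, _, w, hw⟩ := h₂.exact_up_to_refinements (π₂ ≫ π₁ ≫ x - b ≫ θ) (by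
    simp [ha, reassoc_of% hb, he])
  refine ⟨T₃, π₃ ≫ π₂ ≫ π₁, inferInstance, π₃ ≫ b + w ≫ m₁, ?_⟩
  simp [hθ, ← hw]

lemma cokernel_map_comp (f : X ⟶ Y) (g : Y ⟶ Z) [Mono f] [Mono g] :
    IsShortExactSeq (cokernel.map f (f ≫ g) (𝟙 X) g (by simp))
      (cokernel.map (f ≫ g) g f (𝟙 Z) (by simp)) := by
  have h := kernelCokernelCompSequence_exact f g
  have : Mono (cokernel.map f (f ≫ g) (𝟙 X) g (by simp)) :=
    (h.exact 2).mono_g (by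
      change kernelCokernelCompSequence.δ f g = 0
      simp [kernelCokernelCompSequence.δ_fac, kernel.ι_of_mono])
  have : Epi (cokernel.map (f ≫ g) g f (𝟙 Z) (by simp)) := epi_of_epi_fac (cokernel.π_desc _ _ _)
  exact ⟨_, .mk' (h.exact 3) ‹_› ‹_›⟩

end IsShortExactSeq

def ExtClosed (P : 𝒜 → Prop) : Prop :=
  ∀ ⦃X Y Z : 𝒜⦄ (f : X ⟶ Y) (g : Y ⟶ Z), IsShortExactSeq f g → P X → P Z → P Y

lemma Ext1IsZero.exists_lift {E : 𝒜 → Prop} (hE : ExtClosed E) {X I M Y : 𝒜}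
    (h : Ext1IsZero E X I) (hI : E I) (hX : E X) {f : I ⟶ M} {g : M ⟶ Y}
    (hfg : IsShortExactSeq f g) (u : X ⟶ Y) : ∃ s : X ⟶ M, s ≫ g = u := by
  obtain ⟨k, hk⟩ := hfg.exists_pullback_snd u
  obtain ⟨r, hr⟩ := h k (pullback.snd g u) (hE _ _ hk hI hX) hk
  let σ := ShortComplex.Splitting.ofExactOfRetraction _ hk.shortExact.exact r hr hk.epi
  exact ⟨σ.s ≫ pullback.fst g u, by simp [pullback.condition, σ.s_g_assoc]⟩

lemma IsCotorsionPair.extClosed_left {E C I : 𝒜 → Prop} (cp : IsCotorsionPair E C I)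
    (hE : ExtClosed E) : ExtClosed C := by
  intro X Y Z u v huv hX hZ
  obtain ⟨hEX, hXI⟩ := (cp.left_eq X).1 hX
  obtain ⟨hEZ, hZI⟩ := (cp.left_eq Z).1 hZ
  refine (cp.left_eq Y).2 ⟨hE u v huv hEX hEZ, fun J hJ M f g _ hfg => ?_⟩
  -- `M` splits over `X`; dividing out a splitting leaves an extension of `Z` by `J`, which splits.
  have hEJ := ((cp.right_eq J).1 hJ).1
  obtain ⟨s, hs⟩ := (hXI hJ).exists_lift hE hEJ hEX hfg u
  obtain ⟨q, hq⟩ := hfg.comp_cokernel_π huv s hs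
  obtain ⟨r, hr⟩ := hZI hJ _ q (hE _ _ hq hEJ hEZ) hq
  exact ⟨cokernel.π s ≫ r, by simpa using hr⟩

lemma CotorsionSetup.extClosedC {E Cc Ip Zc : 𝒜 → Prop} (S : CotorsionSetup E Cc Ip Zc) :
    ExtClosed Cc :=
  S.cp.extClosed_left S.extClosedE

section Cofibrations

variable {Cc Zc : 𝒜 → Prop} {A B C P : 𝒜}

lemma isAcyclicCofib_iff (hC : IsoClosed Cc) (hZ : IsoClosed Zc) (f : A ⟶ B) :
    IsAcyclicCofib Cc Zc f ↔ Cc A ∧ Cc B ∧ Mono f ∧ Cc (cokernel f) ∧ Zc (cokernel f) :=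
  ⟨fun ⟨hA, hB, _, _, hW, hZW, hf⟩ =>
      ⟨hA, hB, hf.mono, hC hf.cokernelIso.symm hW, hZ hf.cokernelIso.symm hZW⟩,
    fun ⟨hA, hB, _, hCf, hZf⟩ => ⟨hA, hB, _, _, hCf, hZf, .cokernel_π f⟩⟩

lemma IsCofib.of_isPushout (hC : ExtClosed Cc) {f : A ⟶ B} {g : A ⟶ C} {inl : B ⟶ P}
    {inr : C ⟶ P} (sq : IsPushout f g inl inr) (hf : IsCofib Cc f) (hCC : Cc C) :
    IsCofib Cc inr := by
  obtain ⟨-, -, W, p, hW, hfp⟩ := hf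
  have hq := hfp.of_isPushout sq
  exact ⟨hCC, hC _ _ hq hCC hW, W, _, hW, hq⟩

lemma IsAcyclicCofib.of_isPushout (hC : ExtClosed Cc) {f : A ⟶ B} {g : A ⟶ C} {inl : B ⟶ P}
    {inr : C ⟶ P} (sq : IsPushout f g inl inr) (hf : IsAcyclicCofib Cc Zc f) (hCC : Cc C) :
    IsAcyclicCofib Cc Zc inr := by
  obtain ⟨-, -, W, p, hW, hZW, hfp⟩ := hf
  have hq := hfp.of_isPushout sq
  exact ⟨hCC, hC _ _ hq hCC hW, W, _, hW, hZW, hq⟩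

end Cofibrations

namespace CotorsionSetup

variable {E Cc Ip Zc : 𝒜 → Prop}

lemma isAcyclicCofib_comp (S : CotorsionSetup E Cc Ip Zc) {X Y Z : 𝒜} {f : X ⟶ Y}
    {g : Y ⟶ Z} (hf : IsAcyclicCofib Cc Zc f) (hg : IsAcyclicCofib Cc Zc g) :
    IsAcyclicCofib Cc Zc (f ≫ g) := by
  rw [isAcyclicCofib_iff S.isoC S.isoZ] at hf hg ⊢
  obtain ⟨hX, -, _, hCf, hZf⟩ := hf
  obtain ⟨-, hZ, _, hCg, hZg⟩ := hg
  have h := IsShortExactSeq.cokernel_map_comp f g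
  have hCfg := S.extClosedC _ _ h hCf hCg
  exact ⟨hX, hZ, mono_comp f g, hCfg, S.zcExtClosed _ _ h hCf hCfg hCg hZf hZg⟩

lemma isAcyclicCofib_pushout_desc (S : CotorsionSetup E Cc Ip Zc) {A B A' B' : 𝒜}
    {i : A ⟶ B} {α : A ⟶ A'} {β : B ⟶ B'} {i' : A' ⟶ B'} (wi : i ≫ β = α ≫ i')
    (hi : IsCofib Cc i) (hα : IsAcyclicCofib Cc Zc α) (hβ : IsAcyclicCofib Cc Zc β)
    (hcok : IsCofib Cc (cokernel.map α β i i' wi.symm)) :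
    IsAcyclicCofib Cc Zc (pushout.desc β i' wi) := by
  rw [isAcyclicCofib_iff S.isoC S.isoZ] at hα hβ
  obtain ⟨-, hA', _, hCα, hZα⟩ := hα
  obtain ⟨-, hB', _, hCβ, hZβ⟩ := hβ
  obtain ⟨-, -, W, c, hW, he⟩ := hcok
  have sq := IsPushout.of_hasPushout i α
  have hc := (IsShortExactSeq.cokernel_π α).of_isPushout sq.flip
  refine ⟨(hi.of_isPushout S.extClosedC sq hA').2.1, hB', W, _, hW,
    S.zcCokerClosed _ _ he hCα hCβ hW hZα hZβ,
    hc.comparison (.cokernel_π β) he (pushout.inl_desc _ _ _) (sq.hom_ext ?_ ?_)⟩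
  · rw [sq.flip.inr_desc_assoc, pushout.inl_desc_assoc]
    simp
  · rw [sq.flip.inl_desc_assoc, pushout.inr_desc_assoc]
    simp

end CotorsionSetup

lemma pushout.exists_map_eq_comp {𝒞 : Type*} [Category 𝒞] [HasPushouts 𝒞]
    {A B C A' B' C' : 𝒞} {i : A ⟶ B} {j : A ⟶ C} {i' : A' ⟶ B'} {j' : A' ⟶ C'} {α : A ⟶ A'}
    {β : B ⟶ B'} {γ : C ⟶ C'} (wi : i ≫ β = α ≫ i') (wj : j ≫ γ = α ≫ j') :
    ∃ (R : 𝒞) (r : C' ⟶ R) (φ₁ : pushout i j ⟶ R) (ζ : pushout i α ⟶ R)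
      (φ₂ : R ⟶ pushout i' j'),
      IsPushout γ (pushout.inr i j) r φ₁ ∧
      IsPushout (pushout.desc β i' wi) ζ (pushout.inl i' j') φ₂ ∧
      φ₁ ≫ φ₂ = pushout.map i j i' j' β γ α wi wj := by
  have sP := IsPushout.of_hasPushout i j
  have sG := IsPushout.of_hasPushout i α
  have sR := IsPushout.of_hasPushout i (α ≫ j')
  have sq₁ := IsPushout.of_left' (by rw [wj]; exact sR.flip) sP.flip
  have sζ := IsPushout.of_top' sR sG
  have sP' : IsPushout (pushout.inr i α ≫ pushout.desc β i' wi) j' (pushout.inl i' j')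
      (pushout.inr i' j') := by
    rw [pushout.inr_desc]
    exact .of_hasPushout i' j'
  have sq₂ := sP'.of_left' sζ
  refine ⟨_, _, _, _, _, sq₁, sq₂, pushout.hom_ext ?_ ?_⟩
  · rw [sP.flip.inr_desc_assoc, ← sG.inl_desc_assoc _ _ (by simpa using sR.w), ← sq₂.w,
      pushout.inl_desc_assoc, pushout.inl_desc]
  · rw [← sq₁.w_assoc, sζ.inr_desc, pushout.inr_desc]

theorem gluing_for_acyclic_cofibrations_general
    (E Cc Ip Zc : 𝒜 → Prop) (S : CotorsionSetup E Cc Ip Zc)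
    {A B C₀ A' B' C' : 𝒜}
    (i : A ⟶ B) (j : A ⟶ C₀) (i' : A' ⟶ B') (j' : A' ⟶ C')
    (α : A ⟶ A') (β : B ⟶ B') (γ : C₀ ⟶ C')
    (wi : i ≫ β = α ≫ i') (wj : j ≫ γ = α ≫ j')
    (hi : IsCofib Cc i)
    (hα : IsAcyclicCofib Cc Zc α) (hβ : IsAcyclicCofib Cc Zc β)
    (hγ : IsAcyclicCofib Cc Zc γ)
    (hcok : IsCofib Cc (cokernel.map α β i i' wi.symm)) :
    IsAcyclicCofib Cc Zc (pushout.map i j i' j' β γ α wi wj) := by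
  obtain ⟨_, _, φ₁, _, φ₂, sq₁, sq₂, hφ⟩ := pushout.exists_map_eq_comp wi wj
  have hP : Cc (pushout i j) := (hi.of_isPushout S.extClosedC (.of_hasPushout i j) hγ.1).2.1
  have hφ₁ : IsAcyclicCofib Cc Zc φ₁ := hγ.of_isPushout S.extClosedC sq₁ hP
  have hφ₂ : IsAcyclicCofib Cc Zc φ₂ :=
    (S.isAcyclicCofib_pushout_desc wi hi hα hβ hcok).of_isPushout S.extClosedC sq₂ hφ₁.2.1
  rw [← hφ]
  exact S.isAcyclicCofib_comp hφ₁ hφ₂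

/-- In the standing setup, consider a commutative diagram in
`Cc` with rows `C₀ ←j– A –i→ B` and `C' ←j'– A' –i'→ B'` and vertical maps
`γ, α, β`, where `i, i'` are cofibrations, `α, β, γ` are acyclic cofibrations,
and the induced map `cok α ⟶ cok β` is a cofibration.  Then the induced map on
pushouts `φ : B +_A C₀ ⟶ B' +_{A'} C'` is an acyclic cofibration. -/
theorem gluing_for_acyclic_cofibrations
    (E Cc Ip Zc : 𝒜 → Prop) (S : CotorsionSetup E Cc Ip Zc)
    {A B C₀ A' B' C' : 𝒜}
    (i : A ⟶ B) (j : A ⟶ C₀) (i' : A' ⟶ B') (j' : A' ⟶ C')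
    (α : A ⟶ A') (β : B ⟶ B') (γ : C₀ ⟶ C')
    (wi : i ≫ β = α ≫ i') (wj : j ≫ γ = α ≫ j')
    (hi : IsCofib Cc i) (hi' : IsCofib Cc i')
    (hα : IsAcyclicCofib Cc Zc α) (hβ : IsAcyclicCofib Cc Zc β)
    (hγ : IsAcyclicCofib Cc Zc γ)
    (hcok : IsCofib Cc (cokernel.map α β i i' wi.symm)) :
    IsAcyclicCofib Cc Zc (pushout.map i j i' j' β γ α wi wj) :=
  gluing_for_acyclic_cofibrations_general E Cc Ip Zc S i j i' j' α β γ wi wj hi hα hβ hγ hcok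
end
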